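/- Let M(Σ,Ω) = (1 - uΣ)²/Ω_V with u = λ/√6, λ² < 6. On the interior state space {Σ² + Ω < 1, Ω > 0} with 3γ ≥ λ², M attains its infimum value over the closure of the interior, and that infimum equals 1 - u², attained at the point (u, 0). -/

import Mathlib

/-! The identity `(1 - u s)² = (1 - u²)(1 - s²) + (s - u)²` shows that, for `u² ≤ 1` and `Ω ≥ 0`,
`(1 - u Σ)² ≥ (1 - u²)(1 - Σ² - Ω)`, with equality at `(Σ, Ω) = (u, 0)`. Dividing by `Ω_V > 0`
gives the lower bound `1 - u²`, attained at `(u, 0)`. -/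

namespace ScalarFieldCosmology

theorem one_sub_mul_sq_eq (u s : ℝ) : (1 - u * s) ^ 2 = (1 - u ^ 2) * (1 - s ^ 2) + (s - u) ^ 2 := by
  ring

theorem one_sub_sq_mul_le {u s w : ℝ} (hu : u ^ 2 ≤ 1) (hw : 0 ≤ w) :
    (1 - u ^ 2) * (1 - s ^ 2 - w) ≤ (1 - u * s) ^ 2 := by
  rw [one_sub_mul_sq_eq]
  nlinarith [sq_nonneg (s - u), mul_nonneg (sub_nonneg.2 hu) hw]

theorem one_sub_sq_le_div {u s w : ℝ} (hu : u ^ 2 ≤ 1) (hw : 0 ≤ w) (hV : 0 < 1 - s ^ 2 - w) :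
    1 - u ^ 2 ≤ (1 - u * s) ^ 2 / (1 - s ^ 2 - w) :=
  (le_div_iff₀ hV).2 (one_sub_sq_mul_le hu hw)

theorem one_sub_mul_self_sq_div {u : ℝ} (hu : u ^ 2 < 1) :
    (1 - u * u) ^ 2 / (1 - u ^ 2 - 0) = 1 - u ^ 2 := by
  have : (1 : ℝ) - u ^ 2 ≠ 0 := by linarith
  rw [sub_zero, ← sq, sq, mul_self_div_self]

theorem div_sqrt_six_sq_lt_one {lam : ℝ} (hl6 : lam ^ 2 < 6) : (lam / Real.sqrt 6) ^ 2 < 1 := by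
  rw [div_pow, Real.sq_sqrt (by norm_num), div_lt_one (by norm_num)]
  exact hl6

end ScalarFieldCosmology

open ScalarFieldCosmology in
theorem stmt_7 (lam : ℝ) (hl6 : lam ^ 2 < 6) :
    IsLeast ((fun p : ℝ × ℝ => (1 - lam / Real.sqrt 6 * p.1) ^ 2 / (1 - p.1 ^ 2 - p.2)) ''
        {p : ℝ × ℝ | p.1 ^ 2 + p.2 ≤ 1 ∧ 0 ≤ p.2 ∧ 0 < 1 - p.1 ^ 2 - p.2})
      (1 - (lam / Real.sqrt 6) ^ 2) ∧
    (fun p : ℝ × ℝ => (1 - lam / Real.sqrt 6 * p.1) ^ 2 / (1 - p.1 ^ 2 - p.2))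
      (lam / Real.sqrt 6, 0) = 1 - (lam / Real.sqrt 6) ^ 2 := by
  set u := lam / Real.sqrt 6
  have hu : u ^ 2 < 1 := div_sqrt_six_sq_lt_one hl6
  have hval : (1 - u * u) ^ 2 / (1 - u ^ 2 - 0) = 1 - u ^ 2 := one_sub_mul_self_sq_div hu
  have hmem : (u, (0 : ℝ)) ∈ {p : ℝ × ℝ | p.1 ^ 2 + p.2 ≤ 1 ∧ 0 ≤ p.2 ∧ 0 < 1 - p.1 ^ 2 - p.2} :=
    ⟨by simp only [add_zero]; exact hu.le, le_rfl, by simp only [sub_zero, sub_pos]; exact hu⟩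
  refine ⟨⟨⟨_, hmem, hval⟩, ?_⟩, hval⟩
  rintro _ ⟨⟨s, w⟩, ⟨-, hw, hV⟩, rfl⟩
  exact one_sub_sq_le_div hu.le hw hV
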